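/- Let G be a nontrivial additive group and let (X_G, ρ) be the ℝ-tree of pairs (a, f), a > 0, f : ℝ → G with f = 0 on (−∞, a], f eventually 0, f piecewise constant from the left on (a, ∞), with metric ρ(p,q) = (c(p,q) − a) + (c(p,q) − b) where c(p,q) = max(a, b, inf{x : f = g on (x, ∞)}). Then for every point x ∈ X_G, the set of connected components of X_G \ {x} has the same cardinality as Option G (i.e., cardinality |G| + 1). -/

import Mathlib

/-- A point of the tree `X_G`: a pair `(a, f)` with `a > 0`, `f : ℝ → G` vanishing on
`(-∞, a]`, eventually zero, and piecewise constant from the left on `(a, ∞)`. -/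
structure TreePt (G : Type*) [AddGroup G] where
  a : ℝ
  f : ℝ → G
  a_pos : 0 < a
  f_zero : ∀ t : ℝ, t ≤ a → f t = 0
  f_ev : ∃ b : ℝ, ∀ t : ℝ, b ≤ t → f t = 0
  f_pcl : ∀ x : ℝ, a < x → ∃ ε > 0, ∀ s ∈ Set.Icc (x - ε) x ∩ Set.Ioi a, f s = f x

/-- `c(p,q) = max(a, b, inf {x | f = g on (x, ∞)})`. -/
noncomputable def cval {G : Type*} [AddGroup G] (p q : TreePt G) : ℝ :=
  max (max p.a q.a) (sInf {x : ℝ | ∀ t : ℝ, x < t → p.f t = q.f t})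

/-- The metric `ρ(p,q) = (c(p,q) - a) + (c(p,q) - b)` on `X_G`. -/
noncomputable def rho {G : Type*} [AddGroup G] (p q : TreePt G) : ℝ :=
  (cval p q - p.a) + (cval p q - q.a)

/-- The partial order: `(a,f) ⪯ (b,g)` iff `a ≤ b` and `f = g` on `(b, ∞)`. -/
def tle {G : Type*} [AddGroup G] (p q : TreePt G) : Prop :=
  p.a ≤ q.a ∧ ∀ t : ℝ, q.a < t → p.f t = q.f t

/-!
A point `y ≠ x` leaves `x` in one of `|G| + 1` directions: upwards, when `y` is not below `x`
for the order `⪯`, or along the edge below `x` labelled by `g = y.f x.a`, when `y ≺ x`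
(left piecewise constancy makes `y.f` equal to `g` just left of `x.a`). Each set of points with
a given direction is open, since a point within `ρ`-distance `r` of `y` agrees with `y` beyond
`y.a + r`, and path-connected, since truncating a point below level `s` moves it continuously
up to level `s`, and two points in the same direction agree beyond some common level.
So these sets are exactly the connected components of `X_G \ {x}`.
-/

open Set Function

noncomputable def ConnectedComponents.equivOfIsOpenIsPreconnectedFibers {X ι : Type*}
    [TopologicalSpace X] {π : X → ι} (hopen : ∀ i, IsOpen (π ⁻¹' {i})) (hsurj : Surjective π)
    (hconn : ∀ i, IsPreconnected (π ⁻¹' {i})) : ConnectedComponents X ≃ ι :=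
  letI : TopologicalSpace ι := ⊥
  haveI : DiscreteTopology ι := ⟨rfl⟩
  have hπ : Continuous π := continuous_discrete_rng.2 hopen
  Equiv.ofBijective hπ.connectedComponentsLift
    ⟨ConnectedComponents.surjective_coe.forall₂.2 fun _ y hxy =>
      ConnectedComponents.coe_eq_coe'.2 <| (hconn (π y)).subset_connectedComponent rfl hxy,
    Surjective.of_comp (g := ((↑) : X → ConnectedComponents X)) hsurj⟩

section TreeGeometry

variable {G : Type*} [AddGroup G]

section Cval

variable (p q : TreePt G)

lemma le_cval_left : p.a ≤ cval p q :=
  le_max_of_le_left (le_max_left _ _)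

lemma le_cval_right : q.a ≤ cval p q :=
  le_max_of_le_left (le_max_right _ _)

lemma f_eq_of_cval_lt {t : ℝ} (ht : cval p q < t) : p.f t = q.f t := by
  set A : Set ℝ := {x : ℝ | ∀ t : ℝ, x < t → p.f t = q.f t}
  by_cases hbdd : BddBelow A
  · have hA : A.Nonempty := by
      obtain ⟨b₁, hb₁⟩ := p.f_ev
      obtain ⟨b₂, hb₂⟩ := q.f_ev
      refine ⟨max b₁ b₂, fun u hu => ?_⟩
      rw [hb₁ u (le_of_max_le_left hu.le), hb₂ u (le_of_max_le_right hu.le)]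
    obtain ⟨w, hwA, hwt⟩ := exists_lt_of_csInf_lt hA ((le_max_right _ _).trans_lt ht)
    exact hwA t hwt
  · obtain ⟨w, hwA, hwt⟩ := not_bddBelow_iff.1 hbdd t
    exact hwA t hwt

lemma cval_eq_max_of_forall_gt_eq (h : ∀ t, max p.a q.a < t → p.f t = q.f t) :
    cval p q = max p.a q.a := by
  refine max_eq_left ?_
  by_cases hbdd : BddBelow {x : ℝ | ∀ t : ℝ, x < t → p.f t = q.f t}
  · exact csInf_le hbdd h
  · rw [Real.sInf_of_not_bddBelow hbdd]
    exact p.a_pos.le.trans (le_max_left _ _)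

lemma rho_eq_abs_sub_of_forall_gt_eq (h : ∀ t, max p.a q.a < t → p.f t = q.f t) :
    rho p q = |p.a - q.a| := by
  rw [rho, cval_eq_max_of_forall_gt_eq p q h]
  rcases le_total p.a q.a with hle | hle
  · rw [max_eq_right hle, abs_of_nonpos (by linarith)]; ring
  · rw [max_eq_left hle, abs_of_nonneg (by linarith)]; ring

lemma sub_a_le_rho : q.a - p.a ≤ rho p q := by
  unfold rho; linarith [le_cval_left p q, le_cval_right p q]

lemma cval_lt_of_rho_lt {t : ℝ} (h : rho p q < t - q.a) : cval p q < t := by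
  unfold rho at h; linarith [le_cval_left p q]

end Cval

namespace TreePt

lemma ext {p q : TreePt G} (ha : p.a = q.a) (hf : p.f = q.f) : p = q := by
  cases p; cases q; cases ha; cases hf; rfl

noncomputable def trunc (y : TreePt G) (s : ℝ) : TreePt G where
  a := max y.a s
  f t := if max y.a s < t then y.f t else 0
  a_pos := y.a_pos.trans_le (le_max_left _ _)
  f_zero _ ht := if_neg (not_lt.2 ht)
  f_ev := by
    obtain ⟨b, hb⟩ := y.f_ev
    refine ⟨b, fun t ht => ?_⟩
    split_ifs
    exacts [hb t ht, rfl]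
  f_pcl w hw := by
    obtain ⟨ε, hε, hconst⟩ := y.f_pcl w ((le_max_left _ _).trans_lt hw)
    refine ⟨ε, hε, fun u ⟨hu, (hu' : max y.a s < u)⟩ => ?_⟩
    rw [if_pos hu', if_pos hw]
    exact hconst u ⟨hu, (le_max_left _ _).trans_lt hu'⟩

@[simp] lemma trunc_a (y : TreePt G) (s : ℝ) : (y.trunc s).a = max y.a s := rfl

lemma trunc_f_of_lt (y : TreePt G) {s t : ℝ} (h : max y.a s < t) : (y.trunc s).f t = y.f t :=
  if_pos h

lemma trunc_self (y : TreePt G) : y.trunc y.a = y := by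
  refine ext (max_self _) (funext fun t => ?_)
  show (if max y.a y.a < t then y.f t else 0) = y.f t
  rw [max_self]
  split_ifs with h
  · rfl
  · exact (y.f_zero t (not_lt.1 h)).symm

lemma rho_trunc_trunc (y : TreePt G) (u v : ℝ) :
    rho (y.trunc u) (y.trunc v) = |max y.a u - max y.a v| :=
  rho_eq_abs_sub_of_forall_gt_eq _ _ fun _ ht => by
    rw [trunc_f_of_lt y (lt_of_le_of_lt (le_max_left _ _) ht),
      trunc_f_of_lt y (lt_of_le_of_lt (le_max_right _ _) ht)]

noncomputable def below (x : TreePt G) (g : G) : TreePt G where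
  a := x.a / 2
  f t := if x.a < t then x.f t else if x.a / 2 < t then g else 0
  a_pos := half_pos x.a_pos
  f_zero t ht := by
    rw [if_neg (not_lt.2 (ht.trans (half_le_self x.a_pos.le))), if_neg (not_lt.2 ht)]
  f_ev := by
    obtain ⟨b, hb⟩ := x.f_ev
    refine ⟨max b x.a + 1, fun t ht => ?_⟩
    rw [if_pos (by linarith [le_max_right b x.a])]
    exact hb t (by linarith [le_max_left b x.a])
  f_pcl w hw := by
    by_cases hxw : x.a < w
    · obtain ⟨ε, hε, hconst⟩ := x.f_pcl w hxw
      refine ⟨min ε ((w - x.a) / 2), lt_min hε (by linarith), fun u ⟨⟨hu₁, hu₂⟩, _⟩ => ?_⟩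
      have hxu : x.a < u := by linarith [min_le_right ε ((w - x.a) / 2)]
      rw [if_pos hxu, if_pos hxw]
      exact hconst u ⟨⟨by linarith [min_le_left ε ((w - x.a) / 2)], hu₂⟩, hxu⟩
    · refine ⟨1, one_pos, fun u ⟨⟨_, hu⟩, (hu' : x.a / 2 < u)⟩ => ?_⟩
      rw [if_neg (not_lt.2 (hu.trans (not_lt.1 hxw))), if_pos hu', if_neg hxw, if_pos hw]

lemma below_f_of_lt (x : TreePt G) (g : G) {t : ℝ} (h : x.a < t) : (x.below g).f t = x.f t :=
  if_pos h

lemma below_f_self (x : TreePt G) (g : G) : (x.below g).f x.a = g := by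
  show (if x.a < x.a then x.f x.a else if x.a / 2 < x.a then g else 0) = g
  rw [if_neg (lt_irrefl _), if_pos (half_lt_self x.a_pos)]

end TreePt

open TreePt

lemma tle_refl (x : TreePt G) : tle x x := ⟨le_rfl, fun _ _ => rfl⟩

lemma eq_of_tle_of_a_eq {p q : TreePt G} (h : tle p q) (ha : p.a = q.a) : p = q := by
  refine TreePt.ext ha (funext fun t => ?_)
  by_cases ht : q.a < t
  · exact h.2 t ht
  · rw [q.f_zero t (not_lt.1 ht), p.f_zero t (ha ▸ not_lt.1 ht)]

lemma tle_of_trunc_tle {y x : TreePt G} {s : ℝ} (h : tle (y.trunc s) x) : tle y x := by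
  refine ⟨(le_max_left _ s).trans h.1, fun t ht => ?_⟩
  rw [← trunc_f_of_lt y (h.1.trans_lt ht)]
  exact h.2 t ht

section Branches

def upperBranch (x : TreePt G) : Set (TreePt G) := {y | ¬ tle y x}

def lowerBranch (x : TreePt G) (g : G) : Set (TreePt G) := {y | tle y x ∧ y.a < x.a ∧ y.f x.a = g}

def branch (x : TreePt G) (o : Option G) : Set (TreePt G) := o.elim (upperBranch x) (lowerBranch x)

open Classical in
noncomputable def direction (x : TreePt G) (y : {y : TreePt G // y ≠ x}) : Option G :=
  if tle y.1 x then some (y.1.f x.a) else none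

variable (x : TreePt G)

lemma notMem_branch_self (o : Option G) : x ∉ branch x o := by
  cases o with
  | none => exact fun h => h (tle_refl x)
  | some g => exact fun h => lt_irrefl _ h.2.1

lemma preimage_direction (o : Option G) :
    direction x ⁻¹' {o} = Subtype.val ⁻¹' branch x o := by
  ext ⟨y, hyx⟩
  simp only [mem_preimage, mem_singleton_iff, direction]
  split_ifs with h
  · cases o with
    | none => exact iff_of_false (Option.some_ne_none _) (not_not_intro h)
    | some g =>
      exact ⟨fun hg => ⟨h, lt_of_le_of_ne h.1 fun ha => hyx (eq_of_tle_of_a_eq h ha),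
        Option.some_injective _ hg⟩, fun hy => congrArg some hy.2.2⟩
  · cases o with
    | none => exact iff_of_true rfl h
    | some g => exact iff_of_false (Option.some_ne_none _).symm fun hy => h hy.1

lemma branch_nonempty (o : Option G) : (branch x o).Nonempty := by
  cases o with
  | none =>
    refine ⟨x.trunc (x.a + 1), fun h => ?_⟩
    have : max x.a (x.a + 1) ≤ x.a := h.1
    linarith [le_max_right x.a (x.a + 1)]
  | some g => exact ⟨x.below g, ⟨half_le_self x.a_pos.le, fun t ht => below_f_of_lt x g ht⟩,
      half_lt_self x.a_pos, below_f_self x g⟩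

lemma surjective_direction : Surjective (direction x) := fun o => by
  obtain ⟨y, hy⟩ := branch_nonempty x o
  have hyx : y ≠ x := fun h => notMem_branch_self x o (h ▸ hy)
  exact ⟨⟨y, hyx⟩, (Set.ext_iff.1 (preimage_direction x o) ⟨y, hyx⟩).2 hy⟩

lemma trunc_mem_upperBranch {y : TreePt G} (hy : y ∈ upperBranch x) (s : ℝ) :
    y.trunc s ∈ upperBranch x :=
  fun h => hy (tle_of_trunc_tle h)

lemma trunc_mem_lowerBranch {g : G} {y : TreePt G} (hy : y ∈ lowerBranch x g) {s : ℝ}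
    (hs : s < x.a) : y.trunc s ∈ lowerBranch x g := by
  obtain ⟨hyx, hya, hyg⟩ := hy
  have hlt : max y.a s < x.a := max_lt hya hs
  refine ⟨⟨hlt.le, fun t ht => ?_⟩, hlt, ?_⟩
  · rw [trunc_f_of_lt y (hlt.trans ht)]
    exact hyx.2 t ht
  · rw [trunc_f_of_lt y hlt, hyg]

lemma exists_forall_Ioc_eq_of_mem_lowerBranch {g : G} {y : TreePt G} (hy : y ∈ lowerBranch x g) :
    ∃ m < x.a, y.a ≤ m ∧ ∀ t ∈ Ioc m x.a, y.f t = g := by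
  obtain ⟨-, hya, hyg⟩ := hy
  obtain ⟨ε, hε, hconst⟩ := y.f_pcl x.a hya
  refine ⟨max y.a (x.a - ε), max_lt hya (by linarith), le_max_left _ _, fun t ⟨ht, htx⟩ => ?_⟩
  rw [← hyg]
  exact hconst t ⟨⟨(le_max_right _ _).trans ht.le, htx⟩, (le_max_left _ _).trans_lt ht⟩

end Branches

section Metric

variable [MetricSpace (TreePt G)] (hdist : ∀ p q : TreePt G, dist p q = rho p q)
include hdist

lemma lipschitzWith_trunc (y : TreePt G) : LipschitzWith 1 y.trunc := by
  refine LipschitzWith.of_dist_le_mul fun u v => ?_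
  rw [hdist, rho_trunc_trunc, Real.dist_eq, NNReal.coe_one, one_mul, max_comm y.a u,
    max_comm y.a v]
  exact abs_max_sub_max_le_abs _ _ _

lemma joinedIn_trunc {T : Set (TreePt G)} {y : TreePt G} {m : ℝ} (hm : y.a ≤ m)
    (hT : ∀ s ≤ m, y.trunc s ∈ T) : JoinedIn T y (y.trunc m) := by
  have hpath := ((convex_Icc y.a m).isPathConnected (nonempty_Icc.2 hm)).image
    (lipschitzWith_trunc hdist y).continuous
  refine (hpath.joinedIn y ⟨y.a, left_mem_Icc.2 hm, trunc_self y⟩ _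
    (mem_image_of_mem _ (right_mem_Icc.2 hm))).mono ?_
  rintro _ ⟨s, hs, rfl⟩
  exact hT s hs.2

lemma joinedIn_of_forall_gt_eq {T : Set (TreePt G)} {y z : TreePt G} {m : ℝ} (hy : y.a ≤ m)
    (hz : z.a ≤ m) (hyz : ∀ t, m < t → y.f t = z.f t) (hTy : ∀ s ≤ m, y.trunc s ∈ T)
    (hTz : ∀ s ≤ m, z.trunc s ∈ T) : JoinedIn T y z := by
  have htrunc : y.trunc m = z.trunc m := by
    refine TreePt.ext (by simp [max_eq_right hy, max_eq_right hz]) (funext fun t => ?_)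
    show (if max y.a m < t then y.f t else 0) = (if max z.a m < t then z.f t else 0)
    rw [max_eq_right hy, max_eq_right hz]
    split_ifs with ht
    exacts [hyz t ht, rfl]
  exact (joinedIn_trunc hdist hy hTy).trans (htrunc ▸ joinedIn_trunc hdist hz hTz).symm

variable (x : TreePt G)

lemma isOpen_upperBranch : IsOpen (upperBranch x) := by
  refine Metric.isOpen_iff.2 fun y hy => ?_
  by_cases hxy : x.a < y.a
  · refine ⟨y.a - x.a, by linarith, fun z hz hzx => ?_⟩
    rw [Metric.mem_ball, hdist] at hz
    linarith [sub_a_le_rho z y, hzx.1]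
  · obtain ⟨t, hxt, hyt⟩ : ∃ t, x.a < t ∧ y.f t ≠ x.f t := by
      by_contra! h
      exact hy ⟨not_lt.1 hxy, h⟩
    refine ⟨t - y.a, by linarith, fun z hz hzx => hyt ?_⟩
    rw [Metric.mem_ball, hdist] at hz
    rw [← f_eq_of_cval_lt z y (cval_lt_of_rho_lt z y hz), hzx.2 t hxt]

lemma isOpen_lowerBranch (g : G) : IsOpen (lowerBranch x g) := by
  refine Metric.isOpen_iff.2 fun y ⟨hyx, hya, hyg⟩ => ⟨x.a - y.a, by linarith, fun z hz => ?_⟩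
  rw [Metric.mem_ball, hdist] at hz
  have hcx : cval z y < x.a := cval_lt_of_rho_lt z y hz
  have hzy : ∀ t, x.a ≤ t → z.f t = y.f t := fun t ht => f_eq_of_cval_lt z y (hcx.trans_le ht)
  have hzx : z.a < x.a := (le_cval_left z y).trans_lt hcx
  refine ⟨⟨hzx.le, fun t ht => ?_⟩, hzx, ?_⟩
  · rw [hzy t ht.le, hyx.2 t ht]
  · rw [hzy x.a le_rfl, hyg]

lemma isPathConnected_upperBranch : IsPathConnected (upperBranch x) := by
  refine isPathConnected_iff.2 ⟨branch_nonempty x none, fun y hy z hz => ?_⟩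
  obtain ⟨b, hb⟩ := y.f_ev
  obtain ⟨c, hc⟩ := z.f_ev
  refine joinedIn_of_forall_gt_eq hdist (m := max (max y.a z.a) (max b c))
    ((le_max_left _ _).trans (le_max_left _ _)) ((le_max_right _ _).trans (le_max_left _ _))
    (fun t ht => ?_)
    (fun s _ => trunc_mem_upperBranch x hy s) (fun s _ => trunc_mem_upperBranch x hz s)
  have hbc : max b c ≤ t := ((le_max_right _ _).trans_lt ht).le
  rw [hb t ((le_max_left _ _).trans hbc), hc t ((le_max_right _ _).trans hbc)]

lemma isPathConnected_lowerBranch (g : G) : IsPathConnected (lowerBranch x g) := by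
  refine isPathConnected_iff.2 ⟨branch_nonempty x (some g), fun y hy z hz => ?_⟩
  obtain ⟨m₁, hm₁, hym, hy₁⟩ := exists_forall_Ioc_eq_of_mem_lowerBranch x hy
  obtain ⟨m₂, hm₂, hzm, hz₂⟩ := exists_forall_Ioc_eq_of_mem_lowerBranch x hz
  have hm : max m₁ m₂ < x.a := max_lt hm₁ hm₂
  refine joinedIn_of_forall_gt_eq hdist (hym.trans (le_max_left _ _))
    (hzm.trans (le_max_right _ _)) (fun t ht => ?_)
    (fun s hs => trunc_mem_lowerBranch x hy (hs.trans_lt hm))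
    (fun s hs => trunc_mem_lowerBranch x hz (hs.trans_lt hm))
  rcases lt_or_ge x.a t with hxt | htx
  · rw [hy.1.2 t hxt, hz.1.2 t hxt]
  · rw [hy₁ t ⟨(le_max_left _ _).trans_lt ht, htx⟩, hz₂ t ⟨(le_max_right _ _).trans_lt ht, htx⟩]

lemma isOpen_direction_fiber (o : Option G) : IsOpen (direction x ⁻¹' {o}) := by
  rw [preimage_direction]
  refine IsOpen.preimage continuous_subtype_val ?_
  cases o with
  | none => exact isOpen_upperBranch hdist x
  | some g => exact isOpen_lowerBranch hdist x g

lemma isPreconnected_direction_fiber (o : Option G) : IsPreconnected (direction x ⁻¹' {o}) := by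
  have hsub : branch x o ⊆ {y | y ≠ x} := fun y hy hyx => notMem_branch_self x o (hyx ▸ hy)
  rw [← Topology.IsEmbedding.subtypeVal.isInducing.isPreconnected_image, preimage_direction,
    image_preimage_eq_inter_range, Subtype.range_coe_subtype, inter_eq_left.2 hsub]
  cases o with
  | none => exact (isPathConnected_upperBranch hdist x).isConnected.isPreconnected
  | some g => exact (isPathConnected_lowerBranch hdist x g).isConnected.isPreconnected

end Metric

end TreeGeometry

theorem stmt14_general {G : Type*} [AddGroup G] [MetricSpace (TreePt G)]
    (hdist : ∀ p q : TreePt G, dist p q = rho p q) (x : TreePt G) :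
    Nonempty (ConnectedComponents {y : TreePt G // y ≠ x} ≃ Option G) :=
  ⟨ConnectedComponents.equivOfIsOpenIsPreconnectedFibers (isOpen_direction_fiber hdist x)
    (surjective_direction x) (isPreconnected_direction_fiber hdist x)⟩

/-- Every point of the ℝ-tree `X_G` is a branching point of valency `|G| + 1`:
the connected components of `X_G \ {x}` (for the topology of the metric `ρ`)
are in bijection with `Option G`. -/
theorem stmt14 {G : Type*} [AddGroup G] [Nontrivial G] [MetricSpace (TreePt G)]
    (hdist : ∀ p q : TreePt G, dist p q = rho p q) (x : TreePt G) :
    Nonempty (ConnectedComponents {y : TreePt G // y ≠ x} ≃ Option G) :=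
  stmt14_general hdist x
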